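/- arXiv:2510.10953 — 6 statements merged into one kernel-verified Lean document; each statement's English description precedes it below -/
import Mathlib

section
/- Let b, q ≥ 0, let L be a finite index set with positive weights p_l summing to 1, and for each l let P_l be a probability measure on ℝ with mean m_l and variance σ_l². Let σ_max := max_l σ_l, m_min := min_l m_l, m_max := max_l m_l. Then min over t ∈ ℝ of Σ_l p_l · E_{ξ∼P_l}[q(ξ−t)⁺ + b(t−ξ)⁺] ≤ max(b,q) · ( σ_max + (m_max − m_min)/2 ). -/
/-!
Bound the loss pointwise by `max b q * |ξ - t|` and use `|ξ - t| ≤ |ξ - m_l| + |m_l - t|`.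
Since the variance of `|ξ - m_l|` is nonnegative, `E|ξ - m_l| ≤ σ_l`; at the midpoint
`t = (m_min + m_max) / 2` every `|m_l - t|` is at most `(m_max - m_min) / 2`, so each component
loss, hence also their convex combination, is bounded by the right-hand side.
-/

open MeasureTheory ProbabilityTheory

lemma mul_max_sub_add_mul_max_sub_le (b q t x : ℝ) :
    q * max (x - t) 0 + b * max (t - x) 0 ≤ max b q * |x - t| := by
  rcases le_total x t with h | h
  · rw [max_eq_right (by linarith), max_eq_left (by linarith), abs_of_nonpos (by linarith)]
    nlinarith [le_max_left b q]
  · rw [max_eq_left (by linarith), max_eq_right (by linarith), abs_of_nonneg (by linarith)]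
    nlinarith [le_max_right b q]

section Integral

variable {Ω : Type*} [MeasurableSpace Ω] {μ : Measure Ω} [IsProbabilityMeasure μ]

lemma sq_integral_le_integral_sq {f : Ω → ℝ} (hf : AEStronglyMeasurable f μ)
    (hf2 : Integrable (fun x => f x ^ 2) μ) :
    (∫ x, f x ∂μ) ^ 2 ≤ ∫ x, f x ^ 2 ∂μ := by
  have h := variance_eq_sub ((memLp_two_iff_integrable_sq hf).2 hf2)
  simp only [Pi.pow_apply] at h
  linarith [variance_nonneg f μ]

lemma integral_abs_sub_le {f : Ω → ℝ} {m σ : ℝ} (hσ : 0 ≤ σ)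
    (hf : AEStronglyMeasurable f μ) (hf2 : Integrable (fun x => (f x - m) ^ 2) μ)
    (hvar : ∫ x, (f x - m) ^ 2 ∂μ = σ ^ 2) :
    ∫ x, |f x - m| ∂μ ≤ σ := by
  have hsq : (∫ x, |f x - m| ∂μ) ^ 2 ≤ σ ^ 2 := by
    simpa only [sq_abs, hvar] using
      sq_integral_le_integral_sq (f := fun x => |f x - m|)
        (hf.sub aestronglyMeasurable_const).norm (by simpa only [sq_abs] using hf2)
  exact (pow_le_pow_iff_left₀ (integral_nonneg fun _ => abs_nonneg _) hσ two_ne_zero).1 hsq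

lemma integral_mul_max_sub_add_mul_max_sub_le {b q t m σ : ℝ} {f : Ω → ℝ} (hb : 0 ≤ b) (hσ : 0 ≤ σ)
    (hf : Integrable f μ) (hf2 : Integrable (fun x => (f x - m) ^ 2) μ)
    (hvar : ∫ x, (f x - m) ^ 2 ∂μ = σ ^ 2) :
    ∫ x, (q * max (f x - t) 0 + b * max (t - f x) 0) ∂μ ≤ max b q * (σ + |m - t|) := by
  have hbq : 0 ≤ max b q := le_max_of_le_left hb
  have hdev : Integrable (fun x => |f x - m|) μ := (hf.sub (integrable_const m)).abs
  have hloss : Integrable (fun x => q * max (f x - t) 0 + b * max (t - f x) 0) μ :=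
    ((hf.sub (integrable_const t)).pos_part.const_mul q).add
      (((integrable_const t).sub hf).pos_part.const_mul b)
  have hpt (x : Ω) : q * max (f x - t) 0 + b * max (t - f x) 0 ≤
      max b q * (|f x - m| + |m - t|) :=
    (mul_max_sub_add_mul_max_sub_le b q t (f x)).trans <|
      mul_le_mul_of_nonneg_left (abs_sub_le _ _ _) hbq
  calc ∫ x, (q * max (f x - t) 0 + b * max (t - f x) 0) ∂μ
      ≤ ∫ x, max b q * (|f x - m| + |m - t|) ∂μ :=
        integral_mono hloss ((hdev.add (integrable_const _)).const_mul _) hpt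
    _ = max b q * (∫ x, |f x - m| ∂μ + |m - t|) := by
        rw [integral_const_mul, integral_add hdev (integrable_const _), integral_const]
        simp
    _ ≤ max b q * (σ + |m - t|) := by
        gcongr
        exact integral_abs_sub_le hσ hf.aestronglyMeasurable hf2 hvar

end Integral

lemma abs_sub_midpoint_le {a c x : ℝ} (ha : a ≤ x) (hc : x ≤ c) :
    |x - (a + c) / 2| ≤ (c - a) / 2 :=
  abs_le.2 ⟨by linarith, by linarith⟩

open MeasureTheory in
theorem stmt7_general {ι : Type*} [Fintype ι] [Nonempty ι] (b q : ℝ) (hb : 0 ≤ b)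
    (p : ι → ℝ) (hp : ∀ l, 0 < p l) (hsum : ∑ l, p l = 1)
    (P : ι → Measure ℝ) (hP : ∀ l, IsProbabilityMeasure (P l))
    (m σ : ι → ℝ) (hσ : ∀ l, 0 ≤ σ l)
    (hint1 : ∀ l, Integrable (fun x : ℝ => x) (P l))
    (hint2 : ∀ l, Integrable (fun x : ℝ => (x - m l)^2) (P l))
    (hvar : ∀ l, ∫ x, (x - m l)^2 ∂(P l) = (σ l)^2) :
    ∃ t : ℝ, ∑ l, p l * ∫ ξ, (q * max (ξ - t) 0 + b * max (t - ξ) 0) ∂(P l) ≤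
      max b q * (Finset.univ.sup' Finset.univ_nonempty σ +
        (Finset.univ.sup' Finset.univ_nonempty m -
          Finset.univ.inf' Finset.univ_nonempty m) / 2) := by
  set mmax := Finset.univ.sup' Finset.univ_nonempty m
  set mmin := Finset.univ.inf' Finset.univ_nonempty m
  set C := max b q * (Finset.univ.sup' Finset.univ_nonempty σ + (mmax - mmin) / 2)
  refine ⟨(mmin + mmax) / 2, ?_⟩
  have hcomponent (l : ι) :
      ∫ ξ, (q * max (ξ - (mmin + mmax) / 2) 0 + b * max ((mmin + mmax) / 2 - ξ) 0) ∂(P l)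
        ≤ C := by
    have := hP l
    refine (integral_mul_max_sub_add_mul_max_sub_le hb (hσ l) (hint1 l) (hint2 l) (hvar l)).trans <|
      mul_le_mul_of_nonneg_left (add_le_add ?_ ?_) (le_max_of_le_left hb)
    · exact Finset.le_sup' σ (Finset.mem_univ l)
    · exact abs_sub_midpoint_le (Finset.inf'_le m (Finset.mem_univ l))
        (Finset.le_sup' m (Finset.mem_univ l))
  calc _ ≤ ∑ l, p l * C := by gcongr with l _; exacts [(hp l).le, hcomponent l]
    _ = C := by rw [← Finset.sum_mul, hsum, one_mul]

open MeasureTheory in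
theorem stmt7 {ι : Type*} [Fintype ι] [Nonempty ι] (b q : ℝ) (hb : 0 ≤ b) (hq : 0 ≤ q)
    (p : ι → ℝ) (hp : ∀ l, 0 < p l) (hsum : ∑ l, p l = 1)
    (P : ι → Measure ℝ) (hP : ∀ l, IsProbabilityMeasure (P l))
    (m σ : ι → ℝ) (hσ : ∀ l, 0 ≤ σ l)
    (hint1 : ∀ l, Integrable (fun x : ℝ => x) (P l))
    (hint2 : ∀ l, Integrable (fun x : ℝ => (x - m l)^2) (P l))
    (hmean : ∀ l, ∫ x, x ∂(P l) = m l)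
    (hvar : ∀ l, ∫ x, (x - m l)^2 ∂(P l) = (σ l)^2) :
    ∃ t : ℝ, ∑ l, p l * ∫ ξ, (q * max (ξ - t) 0 + b * max (t - ξ) 0) ∂(P l) ≤
      max b q * (Finset.univ.sup' Finset.univ_nonempty σ +
        (Finset.univ.sup' Finset.univ_nonempty m -
          Finset.univ.inf' Finset.univ_nonempty m) / 2) :=
  stmt7_general b q hb p hp hsum P hP m σ hσ hint1 hint2 hvar
end

section
/- Let b, q ≥ 0, let L be a finite index set with nonnegative weights p_l summing to 1, and for each l let P_l be a probability measure on ℝ with mean m_l. Let m_min := min_l m_l, m_max := max_l m_l, and set p̄_min := Σ_{l : m_l = m_min} p_l and p̄_max := Σ_{l : m_l = m_max} p_l. Then for every t ∈ ℝ, Σ_l p_l · E_{ξ∼P_l}[q(ξ−t)⁺ + b(t−ξ)⁺] ≥ max( b·p̄_min·(t − m_min)⁺ , q·p̄_max·(m_max − t)⁺ ), and consequently the minimum over t of the left-hand side is at least (b·p̄_min·q·p̄_max)/(b·p̄_min + q·p̄_max)·(m_max − m_min), provided b·p̄_min + q·p̄_max > 0. -/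
open MeasureTheory in
theorem stmt8 {ι : Type*} [Fintype ι] [Nonempty ι] (b q : ℝ) (hb : 0 ≤ b) (hq : 0 ≤ q)
    (p : ι → ℝ) (hp : ∀ l, 0 ≤ p l) (hsum : ∑ l, p l = 1)
    (P : ι → Measure ℝ) (hP : ∀ l, IsProbabilityMeasure (P l))
    (m : ι → ℝ)
    (hint : ∀ l, Integrable (fun x : ℝ => x) (P l))
    (hmean : ∀ l, ∫ x, x ∂(P l) = m l)
    (mmin mmax pbarmin pbarmax : ℝ)
    (hmmin : mmin = Finset.univ.inf' Finset.univ_nonempty m)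
    (hmmax : mmax = Finset.univ.sup' Finset.univ_nonempty m)
    (hpmin : pbarmin = ∑ l, if m l = mmin then p l else 0)
    (hpmax : pbarmax = ∑ l, if m l = mmax then p l else 0) :
    (∀ t : ℝ, max (b*pbarmin*(max (t - mmin) 0)) (q*pbarmax*(max (mmax - t) 0)) ≤
      ∑ l, p l * ∫ ξ, (q * max (ξ - t) 0 + b * max (t - ξ) 0) ∂(P l)) ∧
    (0 < b*pbarmin + q*pbarmax →
      ∀ t : ℝ, (b*pbarmin*q*pbarmax)/(b*pbarmin+q*pbarmax) * (mmax - mmin) ≤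
        ∑ l, p l * ∫ ξ, (q * max (ξ - t) 0 + b * max (t - ξ) 0) ∂(P l)) := by
  have hpbm : 0 ≤ pbarmin := by
    rw [hpmin]; exact Finset.sum_nonneg fun l _ => by split <;> simp [hp l]
  have hpbM : 0 ≤ pbarmax := by
    rw [hpmax]; exact Finset.sum_nonneg fun l _ => by split <;> simp [hp l]
  have hmm : mmin ≤ mmax := by
    rw [hmmin, hmmax]
    obtain ⟨l⟩ := ‹Nonempty ι›
    exact le_trans (Finset.inf'_le m (Finset.mem_univ l))
      (Finset.le_sup' m (Finset.mem_univ l))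
  have hminle : ∀ l, mmin ≤ m l := fun l => hmmin ▸ Finset.inf'_le m (Finset.mem_univ l)
  have hlemax : ∀ l, m l ≤ mmax := fun l => hmmax ▸ Finset.le_sup' m (Finset.mem_univ l)
  have hintg : ∀ l (t : ℝ), Integrable (fun ξ : ℝ => q * max (ξ - t) 0 + b * max (t - ξ) 0) (P l) := by
    intro l t
    have h1 : Integrable (fun ξ : ℝ => ξ - t) (P l) := (hint l).sub (integrable_const t)
    have h2 : Integrable (fun ξ : ℝ => t - ξ) (P l) := (integrable_const t).sub (hint l)
    exact (h1.pos_part.const_mul q).add (h2.pos_part.const_mul b)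
  have hnn : ∀ l (t : ℝ), 0 ≤ ∫ ξ, (q * max (ξ - t) 0 + b * max (t - ξ) 0) ∂(P l) := by
    intro l t
    refine integral_nonneg fun x => ?_
    positivity
  have hlb1 : ∀ l (t : ℝ), q * (m l - t) ≤ ∫ ξ, (q * max (ξ - t) 0 + b * max (t - ξ) 0) ∂(P l) := by
    intro l t
    haveI := hP l
    have h1 : Integrable (fun ξ : ℝ => ξ - t) (P l) := (hint l).sub (integrable_const t)
    have : ∫ ξ, q * (ξ - t) ∂(P l) = q * (m l - t) := by
      rw [integral_const_mul, integral_sub (hint l) (integrable_const t), hmean l,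
        integral_const]
      simp
    rw [← this]
    refine integral_mono (h1.const_mul q) (hintg l t) fun x => ?_
    have h2 : q * (x - t) ≤ q * max (x - t) 0 :=
      mul_le_mul_of_nonneg_left (le_max_left _ _) hq
    have h3 : 0 ≤ b * max (t - x) 0 := by positivity
    linarith
  have hlb2 : ∀ l (t : ℝ), b * (t - m l) ≤ ∫ ξ, (q * max (ξ - t) 0 + b * max (t - ξ) 0) ∂(P l) := by
    intro l t
    haveI := hP l
    have h1 : Integrable (fun ξ : ℝ => t - ξ) (P l) := (integrable_const t).sub (hint l)
    have : ∫ ξ, b * (t - ξ) ∂(P l) = b * (t - m l) := by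
      rw [integral_const_mul, integral_sub (integrable_const t) (hint l), hmean l,
        integral_const]
      simp
    rw [← this]
    refine integral_mono (h1.const_mul b) (hintg l t) fun x => ?_
    have h2 : b * (t - x) ≤ b * max (t - x) 0 :=
      mul_le_mul_of_nonneg_left (le_max_left _ _) hb
    have h3 : 0 ≤ q * max (x - t) 0 := by positivity
    linarith
  have main : ∀ t : ℝ, max (b*pbarmin*(max (t - mmin) 0)) (q*pbarmax*(max (mmax - t) 0)) ≤
      ∑ l, p l * ∫ ξ, (q * max (ξ - t) 0 + b * max (t - ξ) 0) ∂(P l) := by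
    intro t
    refine max_le ?_ ?_
    · rw [hpmin]
      calc b * (∑ l, if m l = mmin then p l else 0) * max (t - mmin) 0
          = ∑ l, (if m l = mmin then p l * (b * max (t - mmin) 0) else 0) := by
            rw [Finset.mul_sum, Finset.sum_mul]
            refine Finset.sum_congr rfl fun l _ => ?_
            split <;> ring
        _ ≤ ∑ l, p l * ∫ ξ, (q * max (ξ - t) 0 + b * max (t - ξ) 0) ∂(P l) := by
            refine Finset.sum_le_sum fun l _ => ?_
            split
            · rename_i h
              refine mul_le_mul_of_nonneg_left ?_ (hp l)
              rcases le_total (t - mmin) 0 with h0 | h0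
              · rw [max_eq_right h0]; simpa using hnn l t
              · rw [max_eq_left h0]
                calc b * (t - mmin) = b * (t - m l) := by rw [h]
                  _ ≤ _ := hlb2 l t
            · exact mul_nonneg (hp l) (hnn l t)
    · rw [hpmax]
      calc q * (∑ l, if m l = mmax then p l else 0) * max (mmax - t) 0
          = ∑ l, (if m l = mmax then p l * (q * max (mmax - t) 0) else 0) := by
            rw [Finset.mul_sum, Finset.sum_mul]
            refine Finset.sum_congr rfl fun l _ => ?_
            split <;> ring
        _ ≤ ∑ l, p l * ∫ ξ, (q * max (ξ - t) 0 + b * max (t - ξ) 0) ∂(P l) := by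
            refine Finset.sum_le_sum fun l _ => ?_
            split
            · rename_i h
              refine mul_le_mul_of_nonneg_left ?_ (hp l)
              rcases le_total (mmax - t) 0 with h0 | h0
              · rw [max_eq_right h0]; simpa using hnn l t
              · rw [max_eq_left h0]
                calc q * (mmax - t) = q * (m l - t) := by rw [h]
                  _ ≤ _ := hlb1 l t
            · exact mul_nonneg (hp l) (hnn l t)
  refine ⟨main, fun hpos t => ?_⟩
  have A := b * pbarmin
  set X := b*pbarmin*(max (t - mmin) 0) with hX
  set Y := q*pbarmax*(max (mmax - t) 0) with hY
  have hXY : (q*pbarmax) * X + (b*pbarmin) * Y ≥ (b*pbarmin) * (q*pbarmax) * (mmax - mmin) := by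
    have hA : 0 ≤ b*pbarmin := mul_nonneg hb hpbm
    have hQ : 0 ≤ q*pbarmax := mul_nonneg hq hpbM
    have h1 : t - mmin ≤ max (t - mmin) 0 := le_max_left _ _
    have h2 : mmax - t ≤ max (mmax - t) 0 := le_max_left _ _
    have := mul_le_mul_of_nonneg_left h1 (mul_nonneg hQ hA)
    have := mul_le_mul_of_nonneg_left h2 (mul_nonneg hA hQ)
    rw [hX, hY]; nlinarith
  have hmax : (b*pbarmin+q*pbarmax) * max X Y ≥ (b*pbarmin+q*pbarmax) *
      ((b*pbarmin*q*pbarmax)/(b*pbarmin+q*pbarmax) * (mmax - mmin)) := by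
    have hA : 0 ≤ b*pbarmin := mul_nonneg hb hpbm
    have hQ : 0 ≤ q*pbarmax := mul_nonneg hq hpbM
    have e : (b*pbarmin+q*pbarmax) * ((b*pbarmin*q*pbarmax)/(b*pbarmin+q*pbarmax) * (mmax - mmin))
        = (b*pbarmin) * (q*pbarmax) * (mmax - mmin) := by
      have hne : b*pbarmin+q*pbarmax ≠ 0 := ne_of_gt hpos
      field_simp
    rw [e]
    have hx : X ≤ max X Y := le_max_left _ _
    have hy : Y ≤ max X Y := le_max_right _ _
    nlinarith
  have := le_of_mul_le_mul_left (by linarith [hmax] : (b*pbarmin+q*pbarmax) *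
      ((b*pbarmin*q*pbarmax)/(b*pbarmin+q*pbarmax) * (mmax - mmin)) ≤ (b*pbarmin+q*pbarmax) * max X Y) hpos
  exact le_trans this (main t)
end

section
/- Let m > 0, σ > 0, s ∈ [(σ²−m²)/(σ²+m²), 1), b, q ≥ 0, and suppose t satisfies m − (σ/2)·√((1−s)/(1+s)) ≤ t ≤ m + (σ/2)·√((1+s)/(1−s)). Then for the two-point distribution ξ taking value x₁ := m + √(w₁(w₁+w₂)/w₂) with probability w₂/(w₁+w₂) and value x₂ := m − √(w₂(w₁+w₂)/w₁) with probability w₁/(w₁+w₂), where w₁ = (1+s)σ²/2 and w₂ = (1−s)σ²/2, the expected cost E[q(ξ−t)⁺ + b(t−ξ)⁺] equals ((b+q)σ/2)·√(1−s²) + (m−t)·((q−b) − (q+b)s)/2. -/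
set_option maxHeartbeats 1000000


open MeasureTheory in
theorem stmt10 (m σ s b q t : ℝ) (hm : 0 < m) (hσ : 0 < σ)
    (hs1 : (σ^2 - m^2)/(σ^2 + m^2) ≤ s) (hs2 : s < 1) (hb : 0 ≤ b) (hq : 0 ≤ q)
    (ht1 : m - (σ/2)*Real.sqrt ((1-s)/(1+s)) ≤ t)
    (ht2 : t ≤ m + (σ/2)*Real.sqrt ((1+s)/(1-s)))
    (w₁ w₂ : ℝ) (hw₁ : w₁ = (1+s)*σ^2/2) (hw₂ : w₂ = (1-s)*σ^2/2)
    (x₁ x₂ : ℝ) (hx₁ : x₁ = m + Real.sqrt (w₁*(w₁+w₂)/w₂))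
    (hx₂ : x₂ = m - Real.sqrt (w₂*(w₁+w₂)/w₁))
    (P : Measure ℝ)
    (hP : P = (ENNReal.ofReal (w₂/(w₁+w₂))) • Measure.dirac x₁ +
              (ENNReal.ofReal (w₁/(w₁+w₂))) • Measure.dirac x₂) :
    (∫ x, (q * max (x - t) 0 + b * max (t - x) 0) ∂P) =
      ((b+q)*σ/2)*Real.sqrt (1 - s^2) + (m - t)*((q - b) - (q + b)*s)/2 := by
  have hσ2 : (0:ℝ) < σ^2 := by positivity
  have hsm1 : (-1:ℝ) < s := by
    have h : (0:ℝ) < σ^2 + m^2 := by positivity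
    have h2 : (-1:ℝ) < (σ^2 - m^2)/(σ^2 + m^2) := by
      rw [lt_div_iff₀ h]; nlinarith
    linarith
  have h1s : (0:ℝ) < 1 + s := by linarith
  have h1s' : (0:ℝ) < 1 - s := by linarith
  have hw1 : 0 < w₁ := by rw [hw₁]; positivity
  have hw2 : 0 < w₂ := by rw [hw₂]; positivity
  have hsum : w₁ + w₂ = σ^2 := by rw [hw₁, hw₂]; ring
  set u := Real.sqrt (1+s) with hu
  set v := Real.sqrt (1-s) with hv
  have hu2 : u^2 = 1+s := Real.sq_sqrt h1s.le
  have hv2 : v^2 = 1-s := Real.sq_sqrt h1s'.le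
  have hupos : 0 < u := Real.sqrt_pos.mpr h1s
  have hvpos : 0 < v := Real.sqrt_pos.mpr h1s'
  have hA : Real.sqrt ((1+s)/(1-s)) = u/v := Real.sqrt_div h1s.le _
  have hB : Real.sqrt ((1-s)/(1+s)) = v/u := Real.sqrt_div h1s'.le _
  have hx1' : x₁ = m + σ*(u/v) := by
    rw [hx₁]
    congr 1
    have h : w₁*(w₁+w₂)/w₂ = (σ*(u/v))^2 := by
      have h2 : (σ*(u/v))^2 = σ^2*(1+s)/(1-s) := by
        rw [mul_pow, div_pow, hu2, hv2]; ring
      rw [h2, hw₁, hw₂]; field_simp; ring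
    rw [h, Real.sqrt_sq (by positivity)]
  have hx2' : x₂ = m - σ*(v/u) := by
    rw [hx₂]
    congr 1
    have h : w₂*(w₁+w₂)/w₁ = (σ*(v/u))^2 := by
      have h2 : (σ*(v/u))^2 = σ^2*(1-s)/(1+s) := by
        rw [mul_pow, div_pow, hv2, hu2]; ring
      rw [h2, hw₁, hw₂]; field_simp; ring
    rw [h, Real.sqrt_sq (by positivity)]
  have htx1 : t ≤ x₁ := by
    rw [hx1']
    have : (σ/2)*(u/v) ≤ σ*(u/v) := by
      have : 0 ≤ u/v := by positivity
      nlinarith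
    rw [hA] at ht2; linarith
  have htx2 : x₂ ≤ t := by
    rw [hx2']
    have : (σ/2)*(v/u) ≤ σ*(v/u) := by
      have : 0 ≤ v/u := by positivity
      nlinarith
    rw [hB] at ht1; linarith
  set f : ℝ → ℝ := fun x => q * max (x - t) 0 + b * max (t - x) 0 with hf
  have hfc : Continuous f := by
    apply Continuous.add
    · exact continuous_const.mul ((continuous_id.sub continuous_const).max continuous_const)
    · exact continuous_const.mul ((continuous_const.sub continuous_id).max continuous_const)
  have hint : ∀ x₀ : ℝ, Integrable f (Measure.dirac x₀) := by
    intro x₀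
    refine (integrable_const (f x₀)).congr ?_
    have hset : MeasurableSet {x | f x₀ = f x} := by
      have : {x | f x₀ = f x} = f ⁻¹' {f x₀} := by ext x; simp [eq_comm]
      rw [this]; exact hfc.measurable (measurableSet_singleton _)
    rw [Filter.EventuallyEq, MeasureTheory.ae_dirac_iff hset]
  have hc1 : (ENNReal.ofReal (w₂/(w₁+w₂))).toReal = w₂/(w₁+w₂) :=
    ENNReal.toReal_ofReal (by positivity)
  have hc2 : (ENNReal.ofReal (w₁/(w₁+w₂))).toReal = w₁/(w₁+w₂) :=
    ENNReal.toReal_ofReal (by positivity)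
  rw [hP, integral_add_measure ((hint x₁).smul_measure ENNReal.ofReal_ne_top)
      ((hint x₂).smul_measure ENNReal.ofReal_ne_top),
    integral_smul_measure, integral_smul_measure, integral_dirac, integral_dirac,
    hc1, hc2]
  have hfx1 : f x₁ = q * (x₁ - t) := by
    simp only [hf, max_eq_left (by linarith : (0:ℝ) ≤ x₁ - t),
      max_eq_right (by linarith : t - x₁ ≤ 0), mul_zero, add_zero]
  have hfx2 : f x₂ = b * (t - x₂) := by
    simp only [hf, max_eq_right (by linarith : x₂ - t ≤ 0),
      max_eq_left (by linarith : (0:ℝ) ≤ t - x₂), mul_zero, zero_add]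
  rw [hfx1, hfx2, hx1', hx2']
  have hsq : Real.sqrt (1 - s^2) = u*v := by
    rw [show (1:ℝ) - s^2 = (1+s)*(1-s) by ring, Real.sqrt_mul h1s.le]
  rw [hsq, hw₁, hw₂]
  have e1 : (1 - s) * σ ^ 2 / 2 / ((1 + s) * σ ^ 2 / 2 + (1 - s) * σ ^ 2 / 2) = (1-s)/2 := by
    field_simp; ring
  have e2 : (1 + s) * σ ^ 2 / 2 / ((1 + s) * σ ^ 2 / 2 + (1 - s) * σ ^ 2 / 2) = (1+s)/2 := by
    field_simp; ring
  rw [e1, e2, smul_eq_mul, smul_eq_mul]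
  have k1 : (1-s)*(u/v) = u*v := by rw [← hv2]; field_simp
  have k2 : (1+s)*(v/u) = u*v := by rw [← hu2]; field_simp
  linear_combination (q*σ/2)*k1 + (b*σ/2)*k2
end

section
/- Let m > 0, σ > 0, s ∈ [(σ²−m²)/(σ²+m²), 1), b, q ≥ 0, t ∈ [0, m/2], and w₂ := (1−s)σ²/2. Define the dual assignment β := q(m−t), α := q, y₁ := 0, y₂ := (b+q)t/m². Then the dual feasibility conditions hold: β + α(x−m) + y₁(x−m)² ≥ q(x−t) for all x ≥ m, and β + α(x−m) + y₂(x−m)² ≥ q(x−t)⁺ + b(t−x)⁺ for all 0 ≤ x ≤ m, and the dual objective β + α·0 + y₁·w₁' + y₂·w₂ evaluated appropriately equals ((b+q)(1−s)σ²/(2m²) − q)·t + q·m, where the y₁ term contributes zero. -/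
/-!
The dual function `q(m - t) + q(x - m) + y₂(x - m)²` is the line `q(x - t)` plus a nonnegative
parabola vanishing at `m`. Writing the payoff as `q(x - t) + (b + q)(t - x)⁺`, it remains to see
that the parabola `t(x - m)²/m²` dominates `(t - x)⁺` on `x ≥ 0`; after clearing `m²` this is
`x (m(m - 2t) + t x) ≥ 0`, which is where `t ≤ m/2` enters.
-/

lemma max_sub_zero_eq_sub_add_max {α : Type*} [AddCommGroup α] [LinearOrder α]
    [IsOrderedAddMonoid α] (a c : α) : max (a - c) 0 = a - c + max (c - a) 0 := by
  have h := max_zero_sub_max_neg_zero_eq_self (a - c)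
  rw [neg_sub] at h
  exact sub_eq_iff_eq_add.mp h

lemma max_sub_zero_le_mul_sq_div_sq {m t x : ℝ} (hm : 0 < m) (ht0 : 0 ≤ t) (ht : t ≤ m / 2)
    (hx : 0 ≤ x) : max (t - x) 0 ≤ t * (x - m) ^ 2 / m ^ 2 := by
  refine max_le ?_ (by positivity)
  rw [le_div_iff₀ (by positivity)]
  have hfactored : 0 ≤ x * (m * (m - 2 * t) + t * x) :=
    mul_nonneg hx (add_nonneg (mul_nonneg hm.le (by linarith)) (mul_nonneg ht0 hx))
  linear_combination hfactored

lemma payoff_le_dual_of_nonneg {m b q t x : ℝ} (hm : 0 < m) (hb : 0 ≤ b) (hq : 0 ≤ q)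
    (ht0 : 0 ≤ t) (ht : t ≤ m / 2) (hx : 0 ≤ x) :
    q * max (x - t) 0 + b * max (t - x) 0 ≤
      q * (m - t) + q * (x - m) + (b + q) * t / m ^ 2 * (x - m) ^ 2 :=
  calc q * max (x - t) 0 + b * max (t - x) 0
      = q * (x - t) + (b + q) * max (t - x) 0 := by
        rw [max_sub_zero_eq_sub_add_max]; ring
    _ ≤ q * (x - t) + (b + q) * (t * (x - m) ^ 2 / m ^ 2) := by
        gcongr
        exact max_sub_zero_le_mul_sq_div_sq hm ht0 ht hx
    _ = q * (m - t) + q * (x - m) + (b + q) * t / m ^ 2 * (x - m) ^ 2 := by ring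

theorem stmt11_general (m σ s b q t : ℝ) (hm : 0 < m)
    (hb : 0 ≤ b) (hq : 0 ≤ q)
    (ht0 : 0 ≤ t) (ht : t ≤ m/2)
    (w₁ w₂ β α y₁ y₂ : ℝ)
    (hw₂ : w₂ = (1-s)*σ^2/2)
    (hβ : β = q*(m-t)) (hα : α = q) (hy₁ : y₁ = 0) (hy₂ : y₂ = (b+q)*t/m^2) :
    (∀ x : ℝ, m ≤ x → q*(x - t) ≤ β + α*(x - m) + y₁*(x - m)^2) ∧
    (∀ x : ℝ, 0 ≤ x → x ≤ m →
      q * max (x - t) 0 + b * max (t - x) 0 ≤ β + α*(x - m) + y₂*(x - m)^2) ∧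
    β + w₁*y₁ + w₂*y₂ = ((b+q)*(1-s)*σ^2/(2*m^2) - q)*t + q*m := by
  subst hw₂ hβ hα hy₁ hy₂
  refine ⟨fun x _ => le_of_eq (by ring), fun x hx _ => payoff_le_dual_of_nonneg hm hb hq ht0 ht hx,
    by field_simp; ring⟩

theorem stmt11 (m σ s b q t : ℝ) (hm : 0 < m) (hσ : 0 < σ)
    (hs1 : (σ^2 - m^2)/(σ^2 + m^2) ≤ s) (hs2 : s < 1) (hb : 0 ≤ b) (hq : 0 ≤ q)
    (ht0 : 0 ≤ t) (ht : t ≤ m/2)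
    (w₁ w₂ β α y₁ y₂ : ℝ)
    (hw₁ : w₁ = (1+s)*σ^2/2) (hw₂ : w₂ = (1-s)*σ^2/2)
    (hβ : β = q*(m-t)) (hα : α = q) (hy₁ : y₁ = 0) (hy₂ : y₂ = (b+q)*t/m^2) :
    (∀ x : ℝ, m ≤ x → q*(x - t) ≤ β + α*(x - m) + y₁*(x - m)^2) ∧
    (∀ x : ℝ, 0 ≤ x → x ≤ m →
      q * max (x - t) 0 + b * max (t - x) 0 ≤ β + α*(x - m) + y₂*(x - m)^2) ∧
    β + w₁*y₁ + w₂*y₂ = ((b+q)*(1-s)*σ^2/(2*m^2) - q)*t + q*m :=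
  stmt11_general m σ s b q t hm hb hq ht0 ht w₁ w₂ β α y₁ y₂ hw₂ hβ hα hy₁ hy₂
end

section
/- Let m > 0, σ > 0, s ∈ [(σ²−m²)/(σ²+m²), 1), and Δ > 0 with Δ ≥ m(1+s)/(2(1−s)). With w₁ := (1+s)σ²/2, w₂ := (1−s)σ²/2, β := 1 − w₂/m², A(Δ) := w₁/Δ² − 2w₂/(mΔ), B(Δ) := w₁/Δ² − w₂/(mΔ), and S(Δ) := β(β + A(Δ)) > 0, the quantity H(Δ) := β − √S(Δ) + (β/√S(Δ))·B(Δ) is nonnegative. -/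
theorem stmt16 (m σ s Δ : ℝ) (hm : 0 < m) (hσ : 0 < σ)
    (hs1 : (σ^2 - m^2)/(σ^2 + m^2) ≤ s) (hs2 : s < 1)
    (hΔ0 : 0 < Δ) (hΔ : m*(1+s)/(2*(1-s)) ≤ Δ)
    (w₁ w₂ β A B S : ℝ)
    (hw₁ : w₁ = (1+s)*σ^2/2) (hw₂ : w₂ = (1-s)*σ^2/2) (hβ : β = 1 - w₂/m^2)
    (hA : A = w₁/Δ^2 - 2*w₂/(m*Δ)) (hB : B = w₁/Δ^2 - w₂/(m*Δ))
    (hS : S = β*(β + A)) (hSpos : 0 < S) :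
    0 ≤ β - Real.sqrt S + (β / Real.sqrt S) * B := by
  have hm2 : (0:ℝ) < σ^2 + m^2 := by positivity
  have hs1' : σ^2 - m^2 ≤ s * (σ^2 + m^2) := by
    rw [div_le_iff₀ hm2] at hs1; linarith
  have hsm1 : -1 < s := by nlinarith
  have hs1m : 0 < 1 - s := by linarith
  have hs1p : 0 < 1 + s := by linarith
  have hw2pos : 0 < w₂ := by rw [hw₂]; positivity
  have hw1pos : 0 < w₁ := by rw [hw₁]; positivity
  -- key inequality
  have key : w₂^2 ≤ (m^2 - w₂) * w₁ := by
    rw [hw₁, hw₂]; nlinarith [sq_nonneg σ, sq_nonneg m]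
  have hβpos : 0 < β := by
    have hmw : 0 < m^2 - w₂ := by nlinarith
    rw [hβ]
    rw [sub_pos, div_lt_one (by positivity)]
    linarith
  set r := w₂ / (m * Δ) with hr
  have hrpos : 0 < r := by positivity
  have hA2r : A + 2*r = w₁ / Δ^2 := by rw [hA, hr]; ring
  have hr2 : r^2 ≤ β * (w₁ / Δ^2) := by
    have hβval : β = (m^2 - w₂)/m^2 := by rw [hβ]; field_simp
    rw [hr, hβval, div_pow]
    rw [div_mul_div_comm, div_le_div_iff₀ (by positivity) (by positivity)]
    nlinarith [mul_le_mul_of_nonneg_right key (le_of_lt (by positivity : (0:ℝ) < Δ^2))]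
  have hkey2 : (β - r)^2 ≤ S := by
    have h : S - (β - r)^2 = β * (A + 2*r) - r^2 := by rw [hS]; ring
    rw [hA2r] at h
    linarith
  have hsqrt : β - r ≤ Real.sqrt S := by
    calc β - r ≤ |β - r| := le_abs_self _
    _ = Real.sqrt ((β - r)^2) := (Real.sqrt_sq_eq_abs _).symm
    _ ≤ Real.sqrt S := Real.sqrt_le_sqrt hkey2
  have hSsq : 0 < Real.sqrt S := Real.sqrt_pos.mpr hSpos
  have hBr : B = A + r := by rw [hA, hB, hr]; ring
  have hSB : S - β * B = β * (β - r) := by rw [hS, hBr]; ring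
  have h1 : S - β * B ≤ β * Real.sqrt S := by
    rw [hSB]; exact mul_le_mul_of_nonneg_left hsqrt hβpos.le
  have hsq : Real.sqrt S * Real.sqrt S = S := Real.mul_self_sqrt hSpos.le
  have heq : β - Real.sqrt S + (β / Real.sqrt S) * B
      = (β * Real.sqrt S - S + β * B) / Real.sqrt S := by
    rw [show (β * Real.sqrt S - S + β * B) = (β * Real.sqrt S - Real.sqrt S * Real.sqrt S + β * B) by rw [hsq]]
    field_simp
  rw [heq]
  apply div_nonneg _ hSsq.le
  linarith
end

section
/- Let m > 0, σ > 0. There exists a probability distribution on [0, ∞) with mean m, variance σ², and normalized semivariance s if s ∈ [(σ²−m²)/(σ²+m²), 1): specifically, for such s the three-point distribution taking value 0 with probability w₂/m², value x₂ := (m/(m²−w₂))·(m² − √(w₁(m²−w₂) − w₂²)·√((1−π)/π)) with probability π(1 − w₂/m²), and value x₃ := (m/(m²−w₂))·(m² + √(w₁(m²−w₂) − w₂²)·√(π/(1−π))) with probability (1−π)(1 − w₂/m²), where w₁ = (1+s)σ²/2, w₂ = (1−s)σ²/2, and π ∈ [1 − w₂²/(w₁(m²−w₂)), 1), achieves mean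 m, E[((ξ−m)⁺)²] = w₁, and E[((m−ξ)⁺)²] = w₂, provided m² > w₂ and w₁(m²−w₂) ≥ w₂². -/
open MeasureTheory

lemma integrable_dirac'' {f : ℝ → ℝ} (hf : Measurable f) (a : ℝ) :
    Integrable f (Measure.dirac a) := by
  refine ⟨hf.aestronglyMeasurable, ?_⟩
  rw [HasFiniteIntegral, lintegral_dirac]
  exact ENNReal.coe_lt_top

lemma tri_integral (f : ℝ → ℝ) (hf : Measurable f) (c₁ c₂ c₃ a₁ a₂ a₃ : ℝ)
    (h₁ : 0 ≤ c₁) (h₂ : 0 ≤ c₂) (h₃ : 0 ≤ c₃) :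
    ∫ x, f x ∂((ENNReal.ofReal c₁) • Measure.dirac a₁ +
      (ENNReal.ofReal c₂) • Measure.dirac a₂ +
      (ENNReal.ofReal c₃) • Measure.dirac a₃) =
      c₁ * f a₁ + c₂ * f a₂ + c₃ * f a₃ := by
  have hi : ∀ (c : ℝ) (a : ℝ), Integrable f ((ENNReal.ofReal c) • Measure.dirac a) :=
    fun c a => (integrable_dirac'' hf a).smul_measure ENNReal.ofReal_ne_top
  rw [integral_add_measure ((hi c₁ a₁).add_measure (hi c₂ a₂)) (hi c₃ a₃),
    integral_add_measure (hi c₁ a₁) (hi c₂ a₂),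
    integral_smul_measure, integral_smul_measure, integral_smul_measure,
    integral_dirac, integral_dirac, integral_dirac]
  simp [ENNReal.toReal_ofReal, h₁, h₂, h₃]

lemma aux_mean (m w₂ D a b : ℝ) (hm : 0 < m) (hA : 0 < m^2 - w₂)
    (ha : 0 < a) (hb : 0 < b) (hab : a^2 + b^2 = 1) :
    a^2*(1 - w₂/m^2) * ((m/(m^2-w₂)) * (m^2 - D*(b/a))) +
    b^2*(1 - w₂/m^2) * ((m/(m^2-w₂)) * (m^2 + D*(a/b))) = m := by
  have e1 : a^2*(1 - w₂/m^2) * ((m/(m^2-w₂)) * (m^2 - D*(b/a)))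
      = a^2*m - D*a*b/m := by field_simp
  have e2 : b^2*(1 - w₂/m^2) * ((m/(m^2-w₂)) * (m^2 + D*(a/b)))
      = b^2*m + D*a*b/m := by field_simp
  rw [e1, e2]
  linear_combination m * hab

lemma aux_up (m w₂ w₁ D a b : ℝ) (hm : 0 < m) (hA : 0 < m^2 - w₂)
    (ha : 0 < a) (hb : 0 < b) (hab : a^2 + b^2 = 1)
    (hD2 : D^2 = w₁*(m^2-w₂) - w₂^2) :
    a^2*(1 - w₂/m^2) * ((m/(m^2-w₂)) * (m^2 - D*(b/a)) - m)^2 +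
    b^2*(1 - w₂/m^2) * ((m/(m^2-w₂)) * (m^2 + D*(a/b)) - m)^2 = w₁ := by
  have e1 : a^2*(1 - w₂/m^2) * ((m/(m^2-w₂)) * (m^2 - D*(b/a)) - m)^2
      = (a*w₂ - D*b)^2/(m^2-w₂) := by field_simp; ring
  have e2 : b^2*(1 - w₂/m^2) * ((m/(m^2-w₂)) * (m^2 + D*(a/b)) - m)^2
      = (b*w₂ + D*a)^2/(m^2-w₂) := by field_simp; ring
  rw [e1, e2, ← add_div]
  rw [show (a*w₂ - D*b)^2 + (b*w₂ + D*a)^2 = w₁*(m^2-w₂) by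
    linear_combination (w₂^2+D^2)*hab + hD2]
  field_simp

lemma aux_up0 (m w₂ w₁ : ℝ) (hm : 0 < m) (hA : 0 < m^2 - w₂)
    (hD2' : w₁*(m^2-w₂) = w₂^2) :
    (1 - w₂/m^2) * ((m/(m^2-w₂)) * m^2 - m)^2 = w₁ := by
  have e : (m/(m^2-w₂))*m^2 - m = m*w₂/(m^2-w₂) := by field_simp; ring
  rw [e]
  field_simp
  linear_combination (-1) * hD2'

lemma aux_ineq (D w₂ π : ℝ) (h : D^2 ≤ (D^2+w₂^2)*π) : D^2*(1-π) ≤ w₂^2*π := by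
  nlinarith

lemma aux_shift (m w₂ c : ℝ) (hA : (0:ℝ) < m^2 - w₂) :
    (m/(m^2-w₂))*(m^2 - c) - m = (m/(m^2-w₂))*(w₂ - c) := by
  field_simp; ring

lemma aux_shift' (m w₂ c : ℝ) (hA : (0:ℝ) < m^2 - w₂) :
    (m/(m^2-w₂))*(m^2 + c) - m = (m/(m^2-w₂))*(w₂ + c) := by
  field_simp; ring

lemma aux_mean0 (m w₂ : ℝ) (hm : 0 < m) (hA : 0 < m^2 - w₂) :
    (1 - w₂/m^2) * ((m/(m^2-w₂)) * m^2) = m := by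
  field_simp

set_option maxHeartbeats 2000000 in
open MeasureTheory in
theorem stmt17 (m σ s : ℝ) (hm : 0 < m) (hσ : 0 < σ)
    (hs1 : (σ^2 - m^2)/(σ^2 + m^2) ≤ s) (hs2 : s < 1)
    (w₁ w₂ : ℝ) (hw₁ : w₁ = (1+s)*σ^2/2) (hw₂ : w₂ = (1-s)*σ^2/2)
    (hmw : w₂ < m^2) (hww : w₂^2 ≤ w₁*(m^2 - w₂))
    (π : ℝ) (hπ1 : 1 - w₂^2/(w₁*(m^2 - w₂)) ≤ π) (hπ2 : π < 1)
    (x₂ x₃ : ℝ)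
    (hx₂ : x₂ = (m/(m^2 - w₂)) *
      (m^2 - Real.sqrt (w₁*(m^2 - w₂) - w₂^2) * Real.sqrt ((1-π)/π)))
    (hx₃ : x₃ = (m/(m^2 - w₂)) *
      (m^2 + Real.sqrt (w₁*(m^2 - w₂) - w₂^2) * Real.sqrt (π/(1-π))))
    (P : Measure ℝ)
    (hP : P = (ENNReal.ofReal (w₂/m^2)) • Measure.dirac 0 +
              (ENNReal.ofReal (π*(1 - w₂/m^2))) • Measure.dirac x₂ +
              (ENNReal.ofReal ((1-π)*(1 - w₂/m^2))) • Measure.dirac x₃) :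
    IsProbabilityMeasure P ∧
    P (Set.Iio 0) = 0 ∧
    (∫ x, x ∂P) = m ∧
    (∫ x, (max (x - m) 0)^2 ∂P) = w₁ ∧
    (∫ x, (max (m - x) 0)^2 ∂P) = w₂ := by
  have hσ2 : 0 < σ^2 := by positivity
  have hm2 : 0 < m^2 := by positivity
  have hs0 : -1 < s := by
    have h : (-1 : ℝ) < (σ^2 - m^2)/(σ^2 + m^2) := by
      rw [lt_div_iff₀ (by positivity)]; nlinarith
    linarith
  have hw1 : 0 < w₁ := by rw [hw₁]; nlinarith
  have hw2 : 0 < w₂ := by rw [hw₂]; nlinarith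
  have hA : 0 < m^2 - w₂ := by linarith
  set D := Real.sqrt (w₁*(m^2-w₂) - w₂^2) with hDdef
  clear_value D
  have hD0 : 0 ≤ D := hDdef ▸ Real.sqrt_nonneg _
  have hD2 : D^2 = w₁*(m^2-w₂) - w₂^2 := hDdef ▸ Real.sq_sqrt (by linarith)
  have hwA : 0 < w₁*(m^2-w₂) := by positivity
  have hkey : D^2 ≤ w₁*(m^2-w₂)*π := by
    rw [hD2]
    have h' := mul_le_mul_of_nonneg_right hπ1 hwA.le
    rw [sub_mul, div_mul_cancel₀ _ hwA.ne', one_mul] at h'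
    nlinarith
  have hπ0 : 0 ≤ π := by nlinarith
  have hp1 : 0 ≤ w₂/m^2 := by positivity
  have hp1' : w₂/m^2 < 1 := (div_lt_one hm2).mpr hmw
  have hp2 : 0 ≤ π*(1 - w₂/m^2) := mul_nonneg hπ0 (by linarith)
  have hp3 : 0 ≤ (1-π)*(1 - w₂/m^2) := mul_nonneg (by linarith) (by linarith)
  -- key identities and inequalities
  obtain ⟨hmean, hup, hDt⟩ :
      (w₂/m^2 * 0 + π*(1 - w₂/m^2) * x₂ + (1-π)*(1 - w₂/m^2) * x₃ = m) ∧
      (π*(1 - w₂/m^2) * (x₂-m)^2 + (1-π)*(1 - w₂/m^2) * (x₃-m)^2 = w₁) ∧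
      (D * Real.sqrt ((1-π)/π) ≤ w₂) := by
    rcases eq_or_lt_of_le hπ0 with h0 | hπpos
    · have hD : D = 0 := by
        have h1 : D^2 ≤ 0 := by rw [← h0, mul_zero] at hkey; exact hkey
        have h2 : D^2 = 0 := le_antisymm h1 (sq_nonneg D)
        exact pow_eq_zero_iff two_ne_zero |>.mp h2
      have hD2' : w₁*(m^2-w₂) = w₂^2 := by
        rw [hD] at hD2; norm_num at hD2; linarith
      refine ⟨?_, ?_, ?_⟩
      · rw [hx₂, hx₃, hD, ← h0]
        norm_num
        exact aux_mean0 m w₂ hm hA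
      · rw [hx₂, hx₃, hD, ← h0]
        norm_num
        exact aux_up0 m w₂ w₁ hm hA hD2'
      · rw [hD, zero_mul]; exact hw2.le
    · have ha2 : (Real.sqrt π)^2 = π := Real.sq_sqrt hπ0
      have hb2 : (Real.sqrt (1-π))^2 = 1-π := Real.sq_sqrt (by linarith)
      have ha : 0 < Real.sqrt π := Real.sqrt_pos.mpr hπpos
      have hb : 0 < Real.sqrt (1-π) := Real.sqrt_pos.mpr (by linarith)
      have ht : Real.sqrt ((1-π)/π) = Real.sqrt (1-π) / Real.sqrt π :=
        Real.sqrt_div (by linarith) _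
      have hr : Real.sqrt (π/(1-π)) = Real.sqrt π / Real.sqrt (1-π) :=
        Real.sqrt_div hπ0 _
      set a := Real.sqrt π with hadef
      set b := Real.sqrt (1-π) with hbdef
      clear_value a b
      have hab : a^2 + b^2 = 1 := by rw [ha2, hb2]; ring
      refine ⟨?_, ?_, ?_⟩
      · rw [hx₂, hx₃, ht, hr, mul_zero, zero_add, ← hb2, ← ha2]
        exact aux_mean m w₂ D a b hm hA ha hb hab
      · rw [hx₂, hx₃, ht, hr, ← hb2, ← ha2]
        exact aux_up m w₂ w₁ D a b hm hA ha hb hab hD2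
      · rw [ht]
        have h1 : D^2*(1-π) ≤ w₂^2*π := by
          have h2 : (D^2+w₂^2)*π = w₁*(m^2-w₂)*π := by rw [hD2]; ring
          have h3 : D^2 ≤ (D^2+w₂^2)*π := by linarith [hkey]
          exact aux_ineq D w₂ π h3
        have hDt2 : (D * (b/a))^2 ≤ w₂^2 := by
          rw [mul_pow, div_pow, hb2, ha2, mul_div_assoc', div_le_iff₀ hπpos]
          exact h1
        calc D * (b/a) = Real.sqrt ((D * (b/a))^2) := by
              rw [Real.sqrt_sq (by positivity)]
          _ ≤ Real.sqrt (w₂^2) := Real.sqrt_le_sqrt hDt2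
          _ = w₂ := Real.sqrt_sq hw2.le
  -- positions relative to m
  have hx2m : m ≤ x₂ := by
    have h : x₂ - m = (m/(m^2-w₂)) * (w₂ - D * Real.sqrt ((1-π)/π)) := by
      rw [hx₂]; exact aux_shift m w₂ _ hA
    linarith [mul_nonneg (div_nonneg hm.le hA.le) (sub_nonneg.mpr hDt)]
  have hx3m : m ≤ x₃ := by
    have h : x₃ - m = (m/(m^2-w₂)) * (w₂ + D * Real.sqrt (π/(1-π))) := by
      rw [hx₃]; exact aux_shift' m w₂ _ hA
    have h2 : (0:ℝ) ≤ w₂ + D * Real.sqrt (π/(1-π)) :=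
      add_nonneg hw2.le (mul_nonneg hD0 (Real.sqrt_nonneg _))
    linarith [mul_nonneg (div_nonneg hm.le hA.le) h2]
  have hx20 : (0:ℝ) ≤ x₂ := by linarith
  have hx30 : (0:ℝ) ≤ x₃ := by linarith
  refine ⟨?_, ?_, ?_, ?_, ?_⟩
  · constructor
    rw [hP]
    simp only [Measure.add_apply, Measure.smul_apply, Measure.dirac_apply_of_mem
      (Set.mem_univ _), smul_eq_mul, mul_one]
    rw [← ENNReal.ofReal_add hp1 hp2, ← ENNReal.ofReal_add (add_nonneg hp1 hp2) hp3]
    rw [show w₂/m^2 + π*(1 - w₂/m^2) + (1-π)*(1 - w₂/m^2) = 1 by ring]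
    exact ENNReal.ofReal_one
  · have h0 : ∀ a : ℝ, 0 ≤ a → (Measure.dirac a) (Set.Iio 0) = 0 := by
      intro a ha
      rw [Measure.dirac_apply' _ measurableSet_Iio]
      simp [Set.indicator_of_notMem, not_lt.mpr ha]
    rw [hP]
    simp [Measure.add_apply, Measure.smul_apply, h0 0 le_rfl, h0 x₂ hx20, h0 x₃ hx30]
  · rw [hP, tri_integral (fun x => x) measurable_id _ _ _ _ _ _ hp1 hp2 hp3]
    simpa using hmean
  · rw [hP, tri_integral (fun x => (max (x - m) 0)^2)
      (((measurable_id.sub_const m).max measurable_const).pow_const 2) _ _ _ _ _ _ hp1 hp2 hp3]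
    have h1 : max ((0:ℝ) - m) 0 = 0 := max_eq_right (by linarith)
    have h2 : max (x₂ - m) 0 = x₂ - m := max_eq_left (by linarith)
    have h3 : max (x₃ - m) 0 = x₃ - m := max_eq_left (by linarith)
    simp only [h1, h2, h3]
    simpa using hup
  · rw [hP, tri_integral (fun x => (max (m - x) 0)^2)
      (((measurable_const.sub measurable_id).max measurable_const).pow_const 2) _ _ _ _ _ _ hp1 hp2 hp3]
    have h1 : max (m - (0:ℝ)) 0 = m := by rw [sub_zero]; exact max_eq_left hm.le
    have h2 : max (m - x₂) 0 = 0 := max_eq_right (by linarith)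
    have h3 : max (m - x₃) 0 = 0 := max_eq_right (by linarith)
    simp only [h1, h2, h3]
    field_simp
    ring
end
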